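/- Let K*_{n1,n2}(·;q1,q2;x,y) be the bivariate Dunkl q-Szász-Mirakjan-Kantorovich-Stancu operator. Then for all n1,n2 ∈ ℕ⁺, 0<q1,q2<1, μ1,μ2>1/2, α1,α2,β1,β2 ≥ 0 and x,y ≥ 0, applying the operator to the function (u,v) ↦ u − x gives K*_{n1,n2}(e_{1,0}−x;q1,q2;x,y) = (n1/(n1+β1))·(α1/n1 + 1/([2]_{q1}[n1]_{q1})) + (2n1·q1/([2]_{q1}(n1+β1)) − 1)·x. -/

import Mathlib

/-! For a function of the first variable alone the inner Jackson integral in `t` is a constant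
times the interval length `uppB_k - lowB_k = 1/[n₂]_{q₂}`, so the `k₂`-sum collapses to
`E_{μ₂,q₂}/[n₂]_{q₂}` and the bivariate operator reduces to the univariate one. After the Stancu
substitution `u - x` is affine in `s`, and `∫_a^b (c₁ s + c₀) d_q s = c₁ (b² - a²)/[2]_q + c₀ (b - a)`.
The remaining sum `Σ P_k lowB_k`, with `P_k` the terms of `E_{μ,q}(z)`, telescopes: the Dunkl
recursion for `γ` gives `P_{k+1} lowB_{k+1} = (q z/[n]_q) P_k` and `lowB_0 = 0`, so it equals
`q z E_{μ,q}(z)/[n]_q`. -/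

/-- The `q`-number `[x]_q = (1 - q^x)/(1 - q)` for a real exponent `x`. -/
noncomputable def qNum (q x : ℝ) : ℝ := (1 - q ^ x) / (1 - q)

/-- `θ_k = 0` if `k` is even and `1` if `k` is odd. -/
def theta (k : ℕ) : ℕ := if Even k then 0 else 1

/-- The Dunkl `q`-gamma coefficients: `γ_{μ,q}(0) = 1`,
`γ_{μ,q}(k+1) = [2μθ_{k+1} + k + 1]_q ⬝ γ_{μ,q}(k)`. -/
noncomputable def gammaD (mu q : ℝ) : ℕ → ℝ
  | 0 => 1
  | k + 1 => qNum q (2 * mu * (theta (k + 1) : ℝ) + ((k : ℝ) + 1)) * gammaD mu q k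

/-- The Dunkl `q`-exponential `E_{μ,q}(x) = Σ q^{k(k-1)/2} x^k / γ_{μ,q}(k)`. -/
noncomputable def EDunkl (mu q x : ℝ) : ℝ :=
  ∑' k : ℕ, q ^ (k * (k - 1) / 2) * x ^ k / gammaD mu q k

/-- The Jackson `q`-integral `∫_a^b f(t) d_q t`. -/
noncomputable def jacksonInt (q : ℝ) (f : ℝ → ℝ) (a b : ℝ) : ℝ :=
  (1 - q) * (b * ∑' j : ℕ, q ^ j * f (b * q ^ j) - a * ∑' j : ℕ, q ^ j * f (a * q ^ j))

/-- Lower endpoint `[k + 2μθ_k]_q / (q^{k-2} [n]_q)`. -/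
noncomputable def lowB (q mu : ℝ) (n k : ℕ) : ℝ :=
  qNum q ((k : ℝ) + 2 * mu * (theta k : ℝ)) / (q ^ ((k : ℝ) - 2) * qNum q (n : ℝ))

/-- Upper endpoint `([k + 1 + 2μθ_k]_q - 1) / (q^{k-1} [n]_q) + 1/[n]_q`. -/
noncomputable def uppB (q mu : ℝ) (n k : ℕ) : ℝ :=
  (qNum q ((k : ℝ) + 1 + 2 * mu * (theta k : ℝ)) - 1) / (q ^ ((k : ℝ) - 1) * qNum q (n : ℝ))
    + 1 / qNum q (n : ℝ)

/-- The Dunkl `q`-Szász-Mirakjan-Kantorovich-Stancu operator `K̃_{n,q}(f;x)`. -/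
noncomputable def KT (n : ℕ) (q mu α β : ℝ) (f : ℝ → ℝ) (x : ℝ) : ℝ :=
  qNum q (n : ℝ) / EDunkl mu q (qNum q (n : ℝ) * x) *
    ∑' k : ℕ, (qNum q (n : ℝ) * x) ^ k / gammaD mu q k * q ^ (k * (k - 1) / 2) *
      jacksonInt q (fun t => f (((n : ℝ) * t + α) / ((n : ℝ) + β))) (lowB q mu n k) (uppB q mu n k)

/-- The bivariate Dunkl `q`-Szász-Mirakjan-Kantorovich-Stancu operator
`K*_{n₁,n₂}(f; q₁, q₂; x, y)`. -/
noncomputable def KB (n₁ n₂ : ℕ) (q₁ q₂ mu₁ mu₂ α₁ α₂ β₁ β₂ : ℝ) (f : ℝ → ℝ → ℝ)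
    (x y : ℝ) : ℝ :=
  qNum q₁ (n₁ : ℝ) * qNum q₂ (n₂ : ℝ) /
      (EDunkl mu₁ q₁ (qNum q₁ (n₁ : ℝ) * x) * EDunkl mu₂ q₂ (qNum q₂ (n₂ : ℝ) * y)) *
    ∑' k₁ : ℕ, ∑' k₂ : ℕ,
      (qNum q₁ (n₁ : ℝ) * x) ^ k₁ / gammaD mu₁ q₁ k₁ *
        ((qNum q₂ (n₂ : ℝ) * y) ^ k₂ / gammaD mu₂ q₂ k₂) *
        q₁ ^ (k₁ * (k₁ - 1) / 2) * q₂ ^ (k₂ * (k₂ - 1) / 2) *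
        jacksonInt q₂ (fun t =>
            jacksonInt q₁ (fun s =>
                f (((n₁ : ℝ) * s + α₁) / ((n₁ : ℝ) + β₁)) (((n₂ : ℝ) * t + α₂) / ((n₂ : ℝ) + β₂)))
              (lowB q₁ mu₁ n₁ k₁) (uppB q₁ mu₁ n₁ k₁))
          (lowB q₂ mu₂ n₂ k₂) (uppB q₂ mu₂ n₂ k₂)

open Filter

section QNumber

variable {q : ℝ}

lemma qNum_pos (hq0 : 0 < q) (hq1 : q < 1) {a : ℝ} (ha : 0 < a) : 0 < qNum q a :=
  div_pos (sub_pos.2 (Real.rpow_lt_one hq0.le hq1 ha)) (sub_pos.2 hq1)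

lemma one_le_qNum (hq0 : 0 < q) (hq1 : q < 1) {a : ℝ} (ha : 1 ≤ a) : 1 ≤ qNum q a := by
  have h : q ^ a ≤ q := by
    simpa using Real.rpow_le_rpow_of_exponent_ge hq0 hq1.le ha
  rw [qNum, le_div_iff₀ (sub_pos.2 hq1)]
  linarith

lemma qNum_add_one (hq0 : 0 < q) (hq1 : q < 1) (a : ℝ) :
    qNum q (a + 1) = 1 + q * qNum q a := by
  have h1 : (1:ℝ) - q ≠ 0 := (sub_pos.2 hq1).ne'
  rw [qNum, qNum, Real.rpow_add_one hq0.ne']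
  field_simp
  ring

lemma qNum_two (hq0 : 0 < q) (hq1 : q < 1) : qNum q 2 = 1 + q := by
  have h1 : (1:ℝ) - q ≠ 0 := (sub_pos.2 hq1).ne'
  rw [show (2:ℝ) = 1 + 1 by norm_num, qNum_add_one hq0 hq1, qNum, Real.rpow_one, div_self h1,
    mul_one]

end QNumber

section DunklExponential

variable {q mu : ℝ}

noncomputable def dunklTerm (mu q z : ℝ) (k : ℕ) : ℝ :=
  q ^ (k * (k - 1) / 2) * z ^ k / gammaD mu q k

lemma EDunkl_eq_tsum_dunklTerm (mu q z : ℝ) : EDunkl mu q z = ∑' k, dunklTerm mu q z k := rfl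

lemma one_le_dunklArg (hmu : 1 / 2 < mu) (k : ℕ) :
    1 ≤ 2 * mu * (theta (k + 1) : ℝ) + ((k : ℝ) + 1) := by
  have h1 : (0:ℝ) ≤ (theta (k + 1) : ℝ) := Nat.cast_nonneg _
  have h2 : (0:ℝ) ≤ (k : ℝ) := Nat.cast_nonneg _
  nlinarith

lemma one_le_gammaD (hq0 : 0 < q) (hq1 : q < 1) (hmu : 1 / 2 < mu) (k : ℕ) :
    1 ≤ gammaD mu q k := by
  induction k with
  | zero => simp [gammaD]
  | succ k ih =>
    rw [gammaD]
    exact one_le_mul_of_one_le_of_one_le (one_le_qNum hq0 hq1 (one_le_dunklArg hmu k)) ih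

lemma gammaD_pos (hq0 : 0 < q) (hq1 : q < 1) (hmu : 1 / 2 < mu) (k : ℕ) :
    0 < gammaD mu q k :=
  one_pos.trans_le (one_le_gammaD hq0 hq1 hmu k)

lemma triangle_succ (k : ℕ) : (k + 1) * (k + 1 - 1) / 2 = k * (k - 1) / 2 + k := by
  rw [← Nat.choose_two_right, ← Nat.choose_two_right, Nat.choose_succ_succ, Nat.choose_one_right,
    Nat.add_comm]

lemma dunklTerm_nonneg (hq0 : 0 < q) (hq1 : q < 1) (hmu : 1 / 2 < mu) {z : ℝ} (hz : 0 ≤ z)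
    (k : ℕ) : 0 ≤ dunklTerm mu q z k := by
  have := gammaD_pos hq0 hq1 hmu k
  unfold dunklTerm
  positivity

lemma dunklTerm_succ (hq0 : 0 < q) (hq1 : q < 1) (hmu : 1 / 2 < mu) (z : ℝ) (k : ℕ) :
    dunklTerm mu q z (k + 1) =
      q ^ k * z / qNum q (2 * mu * (theta (k + 1) : ℝ) + ((k : ℝ) + 1)) * dunklTerm mu q z k := by
  have hQ := (qNum_pos hq0 hq1 (one_pos.trans_le (one_le_dunklArg hmu k))).ne'
  have hg := (gammaD_pos hq0 hq1 hmu k).ne'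
  rw [dunklTerm, dunklTerm, triangle_succ, pow_add, gammaD]
  field_simp
  ring

lemma summable_dunklTerm (hq0 : 0 < q) (hq1 : q < 1) (hmu : 1 / 2 < mu) {z : ℝ} (hz : 0 ≤ z) :
    Summable (dunklTerm mu q z) := by
  refine summable_of_ratio_norm_eventually_le (r := 1 / 2) (by norm_num) ?_
  have hlim : Tendsto (fun k : ℕ => q ^ k * z) atTop (nhds 0) := by
    simpa using (tendsto_pow_atTop_nhds_zero_of_lt_one hq0.le hq1).mul_const z
  filter_upwards [hlim.eventually_le_const (by norm_num : (0:ℝ) < 1 / 2)] with k hk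
  have hnn := dunklTerm_nonneg hq0 hq1 hmu hz
  rw [Real.norm_of_nonneg (hnn _), Real.norm_of_nonneg (hnn _), dunklTerm_succ hq0 hq1 hmu]
  have hratio := div_le_self (mul_nonneg (pow_nonneg hq0.le k) hz)
    (one_le_qNum hq0 hq1 (one_le_dunklArg hmu k))
  exact mul_le_mul_of_nonneg_right (hratio.trans hk) (hnn k)

lemma one_le_EDunkl (hq0 : 0 < q) (hq1 : q < 1) (hmu : 1 / 2 < mu) {z : ℝ} (hz : 0 ≤ z) :
    1 ≤ EDunkl mu q z := by
  calc (1 : ℝ) = dunklTerm mu q z 0 := by simp [dunklTerm, gammaD]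
    _ ≤ ∑' k, dunklTerm mu q z k :=
      (summable_dunklTerm hq0 hq1 hmu hz).le_tsum 0 fun k _ => dunklTerm_nonneg hq0 hq1 hmu hz k

lemma EDunkl_pos (hq0 : 0 < q) (hq1 : q < 1) (hmu : 1 / 2 < mu) {z : ℝ} (hz : 0 ≤ z) :
    0 < EDunkl mu q z :=
  one_pos.trans_le (one_le_EDunkl hq0 hq1 hmu hz)

end DunklExponential

section KantorovichIntervals

variable {q mu : ℝ} {n : ℕ}

lemma lowB_zero (q mu : ℝ) (n : ℕ) : lowB q mu n 0 = 0 := by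
  simp [lowB, theta, qNum]

lemma uppB_eq_lowB_add (hq0 : 0 < q) (hq1 : q < 1) (hn : 0 < n) (k : ℕ) :
    uppB q mu n k = lowB q mu n k + 1 / qNum q n := by
  have h1 : q ^ ((k : ℝ) - 2) ≠ 0 := (Real.rpow_pos_of_pos hq0 _).ne'
  have h2 : qNum q n ≠ 0 := (qNum_pos hq0 hq1 (Nat.cast_pos.2 hn)).ne'
  rw [uppB, lowB, show (k : ℝ) + 1 + 2 * mu * theta k = (k + 2 * mu * theta k) + 1 by ring,
    qNum_add_one hq0 hq1, show (k : ℝ) - 1 = (k - 2) + 1 by ring, Real.rpow_add_one hq0.ne']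
  field_simp
  ring

lemma dunklTerm_succ_mul_lowB (hq0 : 0 < q) (hq1 : q < 1) (hmu : 1 / 2 < mu) (hn : 0 < n)
    (z : ℝ) (k : ℕ) :
    dunklTerm mu q z (k + 1) * lowB q mu n (k + 1) = q * z / qNum q n * dunklTerm mu q z k := by
  have hQ := (qNum_pos hq0 hq1 (one_pos.trans_le (one_le_dunklArg hmu k))).ne'
  have hN : qNum q n ≠ 0 := (qNum_pos hq0 hq1 (Nat.cast_pos.2 hn)).ne'
  have hqk : q ^ k ≠ 0 := pow_ne_zero _ hq0.ne'
  have hpow : q ^ (((k + 1 : ℕ) : ℝ) - 2) = q ^ k / q := by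
    rw [show ((k + 1 : ℕ) : ℝ) - 2 = k + (-1) by push_cast; ring, Real.rpow_add hq0,
      Real.rpow_neg_one, Real.rpow_natCast, div_eq_mul_inv]
  rw [dunklTerm_succ hq0 hq1 hmu, lowB, hpow,
    show ((k + 1 : ℕ) : ℝ) + 2 * mu * theta (k + 1) = 2 * mu * theta (k + 1) + (k + 1) by
      push_cast; ring]
  field_simp

lemma summable_dunklTerm_mul_lowB (hq0 : 0 < q) (hq1 : q < 1) (hmu : 1 / 2 < mu) (hn : 0 < n)
    {z : ℝ} (hz : 0 ≤ z) : Summable fun k => dunklTerm mu q z k * lowB q mu n k := by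
  rw [← summable_nat_add_iff 1, funext (dunklTerm_succ_mul_lowB hq0 hq1 hmu hn z)]
  exact (summable_dunklTerm hq0 hq1 hmu hz).mul_left _

lemma tsum_dunklTerm_mul_lowB (hq0 : 0 < q) (hq1 : q < 1) (hmu : 1 / 2 < mu) (hn : 0 < n)
    {z : ℝ} (hz : 0 ≤ z) :
    ∑' k, dunklTerm mu q z k * lowB q mu n k = q * z / qNum q n * EDunkl mu q z := by
  rw [(summable_dunklTerm_mul_lowB hq0 hq1 hmu hn hz).tsum_eq_zero_add, lowB_zero, mul_zero,
    zero_add, tsum_congr (dunklTerm_succ_mul_lowB hq0 hq1 hmu hn z), tsum_mul_left,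
    EDunkl_eq_tsum_dunklTerm]

end KantorovichIntervals

section JacksonIntegral

variable {q : ℝ}

lemma jacksonInt_affine (hq0 : 0 < q) (hq1 : q < 1) (c₁ c₀ a b : ℝ) :
    jacksonInt q (fun s => c₁ * s + c₀) a b = c₁ * (b ^ 2 - a ^ 2) / (1 + q) + c₀ * (b - a) := by
  have hq2 : q ^ 2 < 1 := by nlinarith
  have hgeom := summable_geometric_of_lt_one hq0.le hq1
  have hgeom2 := summable_geometric_of_lt_one (sq_nonneg q) hq2
  have hsum : ∀ c : ℝ, ∑' j : ℕ, q ^ j * (c₁ * (c * q ^ j) + c₀) =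
      c₁ * c * (1 - q ^ 2)⁻¹ + c₀ * (1 - q)⁻¹ := by
    intro c
    simp_rw [show ∀ j : ℕ, q ^ j * (c₁ * (c * q ^ j) + c₀) = c₁ * c * (q ^ 2) ^ j + c₀ * q ^ j
      from fun j => by ring]
    rw [(hgeom2.mul_left _).tsum_add (hgeom.mul_left _), tsum_mul_left, tsum_mul_left,
      tsum_geometric_of_lt_one hq0.le hq1, tsum_geometric_of_lt_one (sq_nonneg q) hq2]
  have h1 : (1:ℝ) - q ≠ 0 := by linarith
  have h2 : (1:ℝ) + q ≠ 0 := by linarith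
  have h3 : (1:ℝ) - q ^ 2 ≠ 0 := by linarith
  rw [jacksonInt, hsum a, hsum b]
  field_simp
  ring

lemma jacksonInt_const (hq0 : 0 < q) (hq1 : q < 1) (c a b : ℝ) :
    jacksonInt q (fun _ => c) a b = c * (b - a) := by
  simpa using jacksonInt_affine hq0 hq1 0 c a b

end JacksonIntegral

section Operators

variable {q mu α β x : ℝ} {n : ℕ}

theorem KT_eq_of_comp_affine (hq0 : 0 < q) (hq1 : q < 1) (hmu : 1 / 2 < mu) (hn : 0 < n)
    (hx : 0 ≤ x) {f : ℝ → ℝ} {c₁ c₀ : ℝ} (hf : ∀ t, f ((n * t + α) / (n + β)) = c₁ * t + c₀) :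
    KT n q mu α β f x = c₁ * (2 * q * x + 1 / qNum q n) / (1 + q) + c₀ := by
  have hN : 0 < qNum q n := qNum_pos hq0 hq1 (Nat.cast_pos.2 hn)
  have hz : 0 ≤ qNum q n * x := mul_nonneg hN.le hx
  have hE := (EDunkl_pos hq0 hq1 hmu hz).ne'
  have h2 : (1:ℝ) + q ≠ 0 := by linarith
  have hterm : ∀ k : ℕ, (qNum q n * x) ^ k / gammaD mu q k * q ^ (k * (k - 1) / 2) *
        jacksonInt q (fun t => f ((n * t + α) / (n + β))) (lowB q mu n k) (uppB q mu n k) =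
      2 * c₁ / ((1 + q) * qNum q n) * (dunklTerm mu q (qNum q n * x) k * lowB q mu n k) +
        (c₁ / ((1 + q) * qNum q n ^ 2) + c₀ / qNum q n) * dunklTerm mu q (qNum q n * x) k := by
    intro k
    have hg := (gammaD_pos hq0 hq1 hmu k).ne'
    simp_rw [hf]
    rw [jacksonInt_affine hq0 hq1, uppB_eq_lowB_add hq0 hq1 hn, dunklTerm]
    field_simp
    ring
  rw [KT, tsum_congr hterm,
    ((summable_dunklTerm_mul_lowB hq0 hq1 hmu hn hz).mul_left _).tsum_add
      ((summable_dunklTerm hq0 hq1 hmu hz).mul_left _),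
    tsum_mul_left, tsum_mul_left, tsum_dunklTerm_mul_lowB hq0 hq1 hmu hn hz,
    ← EDunkl_eq_tsum_dunklTerm]
  field_simp
  ring

theorem KB_eq_KT_of_fst {n₁ n₂ : ℕ} {q₁ q₂ mu₁ mu₂ α₁ α₂ β₁ β₂ x y : ℝ} (hn₂ : 0 < n₂)
    (hq₂0 : 0 < q₂) (hq₂1 : q₂ < 1) (hmu₂ : 1 / 2 < mu₂) (hy : 0 ≤ y) (g : ℝ → ℝ) :
    KB n₁ n₂ q₁ q₂ mu₁ mu₂ α₁ α₂ β₁ β₂ (fun u _ => g u) x y = KT n₁ q₁ mu₁ α₁ β₁ g x := by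
  have hN₂ : 0 < qNum q₂ n₂ := qNum_pos hq₂0 hq₂1 (Nat.cast_pos.2 hn₂)
  have hE₂ := (EDunkl_pos hq₂0 hq₂1 hmu₂ (mul_nonneg hN₂.le hy)).ne'
  set a : ℕ → ℝ := fun k => (qNum q₁ n₁ * x) ^ k / gammaD mu₁ q₁ k * q₁ ^ (k * (k - 1) / 2) *
    jacksonInt q₁ (fun s => g ((n₁ * s + α₁) / (n₁ + β₁))) (lowB q₁ mu₁ n₁ k) (uppB q₁ mu₁ n₁ k)
  have hterm : ∀ k₁ k₂ : ℕ,
      (qNum q₁ n₁ * x) ^ k₁ / gammaD mu₁ q₁ k₁ * ((qNum q₂ n₂ * y) ^ k₂ / gammaD mu₂ q₂ k₂) *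
        q₁ ^ (k₁ * (k₁ - 1) / 2) * q₂ ^ (k₂ * (k₂ - 1) / 2) *
        jacksonInt q₂ (fun _ => jacksonInt q₁ (fun s => g ((n₁ * s + α₁) / (n₁ + β₁)))
            (lowB q₁ mu₁ n₁ k₁) (uppB q₁ mu₁ n₁ k₁))
          (lowB q₂ mu₂ n₂ k₂) (uppB q₂ mu₂ n₂ k₂) =
      a k₁ / qNum q₂ n₂ * dunklTerm mu₂ q₂ (qNum q₂ n₂ * y) k₂ := by
    intro k₁ k₂
    rw [jacksonInt_const hq₂0 hq₂1, uppB_eq_lowB_add hq₂0 hq₂1 hn₂, dunklTerm]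
    ring
  rw [KB, tsum_congr fun k₁ => tsum_congr (hterm k₁)]
  simp_rw [tsum_mul_left, ← EDunkl_eq_tsum_dunklTerm, tsum_mul_right, tsum_div_const]
  change _ = qNum q₁ n₁ / _ * ∑' k, a k
  field_simp

end Operators

theorem KB_e10_sub_x_general (n₁ n₂ : ℕ) (hn₁ : 0 < n₁) (hn₂ : 0 < n₂)
    (q₁ q₂ mu₁ mu₂ α₁ α₂ β₁ β₂ x y : ℝ)
    (hq₁0 : 0 < q₁) (hq₁1 : q₁ < 1) (hq₂0 : 0 < q₂) (hq₂1 : q₂ < 1)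
    (hmu₁ : 1 / 2 < mu₁) (hmu₂ : 1 / 2 < mu₂)
    (hβ₁ : 0 ≤ β₁)
    (hx : 0 ≤ x) (hy : 0 ≤ y) :
    KB n₁ n₂ q₁ q₂ mu₁ mu₂ α₁ α₂ β₁ β₂ (fun u _ => u - x) x y =
      (n₁ : ℝ) / ((n₁ : ℝ) + β₁) * (α₁ / (n₁ : ℝ) + 1 / (qNum q₁ 2 * qNum q₁ (n₁ : ℝ)))
        + (2 * (n₁ : ℝ) * q₁ / (qNum q₁ 2 * ((n₁ : ℝ) + β₁)) - 1) * x := by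
  have hn : (0 : ℝ) < n₁ := Nat.cast_pos.2 hn₁
  have hnβ : (n₁ : ℝ) + β₁ ≠ 0 := by positivity
  have hN : qNum q₁ n₁ ≠ 0 := (qNum_pos hq₁0 hq₁1 hn).ne'
  have h2 : 1 + q₁ ≠ 0 := by positivity
  have hstancu : ∀ t, ((n₁ * t + α₁) / (n₁ + β₁)) - x =
      n₁ / (n₁ + β₁) * t + (α₁ / (n₁ + β₁) - x) := fun t => by field_simp; ring
  rw [KB_eq_KT_of_fst hn₂ hq₂0 hq₂1 hmu₂ hy, KT_eq_of_comp_affine hq₁0 hq₁1 hmu₁ hn₁ hx hstancu,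
    qNum_two hq₁0 hq₁1]
  field_simp
  ring

/-- `K*_{n₁,n₂}(e_{1,0} - x; q₁, q₂; x, y)
  = (n₁/(n₁+β₁))(α₁/n₁ + 1/([2]_{q₁}[n₁]_{q₁})) + (2n₁q₁/([2]_{q₁}(n₁+β₁)) - 1) x`. -/
theorem KB_e10_sub_x (n₁ n₂ : ℕ) (hn₁ : 0 < n₁) (hn₂ : 0 < n₂)
    (q₁ q₂ mu₁ mu₂ α₁ α₂ β₁ β₂ x y : ℝ)
    (hq₁0 : 0 < q₁) (hq₁1 : q₁ < 1) (hq₂0 : 0 < q₂) (hq₂1 : q₂ < 1)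
    (hmu₁ : 1 / 2 < mu₁) (hmu₂ : 1 / 2 < mu₂)
    (hα₁ : 0 ≤ α₁) (hα₂ : 0 ≤ α₂) (hβ₁ : 0 ≤ β₁) (hβ₂ : 0 ≤ β₂)
    (hx : 0 ≤ x) (hy : 0 ≤ y) :
    KB n₁ n₂ q₁ q₂ mu₁ mu₂ α₁ α₂ β₁ β₂ (fun u _ => u - x) x y =
      (n₁ : ℝ) / ((n₁ : ℝ) + β₁) * (α₁ / (n₁ : ℝ) + 1 / (qNum q₁ 2 * qNum q₁ (n₁ : ℝ)))
        + (2 * (n₁ : ℝ) * q₁ / (qNum q₁ 2 * ((n₁ : ℝ) + β₁)) - 1) * x :=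
  KB_e10_sub_x_general n₁ n₂ hn₁ hn₂ q₁ q₂ mu₁ mu₂ α₁ α₂ β₁ β₂ x y hq₁0 hq₁1 hq₂0 hq₂1 hmu₁ hmu₂ hβ₁
    hx hy
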